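/- arXiv:1706.04130 — 3 statements merged into one kernel-verified Lean document; each statement's English description precedes it below -/
import Mathlib

section
/- Let G be the parallel composition of two-terminal graphs G_1 and G_2 with common source s and sink t, sharing no other vertices and with no common edge. Suppose G_1 has a path cover containing an s–t path P together with a path Q that starts at t and does not contain s, and G_2 has a path cover containing an s–t path. Then merging the s–t path of G_2 with Q at t yields a path cover of G of size p_1 + p_2 − 1 containing an s–t path, where p_1, p_2 are the sizes of the two given covers. -/
/-!
Both covers lift to `G₁ ⊔ G₂`, and their union is a path cover there because `G₁` and `G₂`
share no edge. The `s`–`t` path `R` of `G₂` and the path `Q` leaving `t` meet only at `t`: a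
common vertex lies in the support of both graphs, so it is `s` or `t`, and `s` is not on `Q`.
Concatenating them at `t` replaces two members of the cover by one, and `P` survives as the
required `s`–`t` path.
-/

open SimpleGraph

/-- A simple path in a graph `G`, given by its two endpoints and a walk between them
which is a path and is non-trivial (contains at least one edge). -/
structure PathIn {V : Type*} (G : SimpleGraph V) where
  a : V
  b : V
  walk : G.Walk a b
  isPath : walk.IsPath
  nonNil : ¬ walk.Nil

/-- A path cover of `G`: a collection of pairwise edge-disjoint simple paths
whose union covers every edge of `G` exactly once. -/
def IsPathCover {V : Type*} (G : SimpleGraph V) (ps : List (PathIn G)) : Prop :=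
  (ps.Pairwise fun p q => ∀ e ∈ p.walk.edges, e ∉ q.walk.edges) ∧
  ∀ e : Sym2 V, e ∈ G.edgeSet ↔ ∃ p ∈ ps, e ∈ p.walk.edges

theorem List.length_erase_erase_add_two {α : Type*} [DecidableEq α] {l : List α} {a b : α}
    (ha : a ∈ l) (hb : b ∈ l) (hab : a ≠ b) : ((l.erase a).erase b).length + 2 = l.length := by
  have hb' : b ∈ l.erase a := (List.mem_erase_of_ne hab.symm).mpr hb
  have := List.length_pos_of_mem hb'
  rw [List.length_erase_of_mem hb', List.length_erase_of_mem ha]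
  rw [List.length_erase_of_mem ha] at this
  omega

namespace SimpleGraph.Walk

variable {V : Type*} {G : SimpleGraph V}

theorem IsPath.append {u v w : V} {p : G.Walk u v} {q : G.Walk v w} (hp : p.IsPath)
    (hq : q.IsPath) (h : ∀ x ∈ p.support, x ∈ q.support → x = v) : (p.append q).IsPath := by
  have hq' := hq.support_nodup
  rw [← q.cons_tail_support, List.nodup_cons] at hq'
  rw [isPath_def, support_append]
  refine hp.support_nodup.append hq'.2 fun x hx hx' => ?_
  obtain rfl := h x hx (List.mem_of_mem_tail hx')
  exact hq'.1 hx'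

end SimpleGraph.Walk

namespace PathIn

variable {V : Type*} {G H : SimpleGraph V}

def mapLe (p : PathIn G) (h : G ≤ H) : PathIn H :=
  ⟨p.a, p.b, p.walk.mapLe h, p.isPath.mapLe h, by simpa [Walk.nil_map_iff] using p.nonNil⟩

@[simp] theorem edges_mapLe (p : PathIn G) (h : G ≤ H) :
    (p.mapLe h).walk.edges = p.walk.edges :=
  Walk.edges_mapLe_eq_edges _ _

@[simp] theorem support_mapLe (p : PathIn G) (h : G ≤ H) :
    (p.mapLe h).walk.support = p.walk.support :=
  Walk.support_mapLe_eq_support _ _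

def reverse (p : PathIn G) : PathIn G :=
  ⟨p.b, p.a, p.walk.reverse, p.isPath.reverse, by simpa [Walk.nil_reverse] using p.nonNil⟩

-- Not `@[simp]`: it would rewrite the endpoint indices of `p.reverse.walk` and block the
-- simp lemmas about that walk.
theorem reverse_a (p : PathIn G) : p.reverse.a = p.b := rfl

@[simp] theorem mem_edges_reverse {p : PathIn G} {e : Sym2 V} :
    e ∈ p.reverse.walk.edges ↔ e ∈ p.walk.edges := by
  simp [reverse]

@[simp] theorem mem_support_reverse {p : PathIn G} {x : V} :
    x ∈ p.reverse.walk.support ↔ x ∈ p.walk.support := by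
  simp [reverse]

def append (p q : PathIn G) (hpq : p.b = q.a)
    (h : ∀ x ∈ p.walk.support, x ∈ q.walk.support → x = p.b) : PathIn G where
  a := p.a
  b := q.b
  walk := p.walk.append (q.walk.copy hpq.symm rfl)
  isPath := p.isPath.append (by simpa using q.isPath) (by simpa using h)
  nonNil := by simp [Walk.nil_append_iff, p.nonNil]

@[simp] theorem mem_edges_append {p q : PathIn G} {hpq h} {e : Sym2 V} :
    e ∈ (p.append q hpq h).walk.edges ↔ e ∈ p.walk.edges ∨ e ∈ q.walk.edges := by
  simp [append]

theorem exists_b_eq (p : PathIn G) {v : V} (hv : p.a = v ∨ p.b = v) :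
    ∃ p' : PathIn G, p'.b = v ∧ (∀ e, e ∈ p'.walk.edges ↔ e ∈ p.walk.edges) ∧
      ∀ x, x ∈ p'.walk.support ↔ x ∈ p.walk.support := by
  rcases hv with rfl | rfl
  exacts [⟨p.reverse, rfl, by simp, by simp⟩, ⟨p, rfl, by simp, by simp⟩]

theorem exists_merge (p q : PathIn G) {v : V} (hp : p.a = v ∨ p.b = v) (hq : q.a = v ∨ q.b = v)
    (h : ∀ x ∈ p.walk.support, x ∈ q.walk.support → x = v) :
    ∃ r : PathIn G, ∀ e, e ∈ r.walk.edges ↔ e ∈ p.walk.edges ∨ e ∈ q.walk.edges := by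
  obtain ⟨p', rfl, hpe, hps⟩ := p.exists_b_eq hp
  obtain ⟨q', hq', hqe, hqs⟩ := q.exists_b_eq hq
  refine ⟨p'.append q'.reverse (hq'.symm.trans q'.reverse_a.symm) fun x hxp hxq => ?_,
    fun e => by simp [hpe, hqe]⟩
  exact h x ((hps x).mp hxp) ((hqs x).mp (mem_support_reverse.mp hxq))

theorem ne_of_edges_disjoint {p q : PathIn G} (h : ∀ e ∈ p.walk.edges, e ∉ q.walk.edges) :
    p ≠ q := by
  rintro rfl
  obtain ⟨e, he⟩ := List.exists_mem_of_ne_nil _ (Walk.edges_eq_nil.not.mpr p.nonNil)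
  exact h e he he

end PathIn

namespace IsPathCover

variable {V : Type*} {G G₁ G₂ : SimpleGraph V} {ps qs : List (PathIn G)} {p q r : PathIn G}

theorem edges_disjoint (h : IsPathCover G ps) (hp : p ∈ ps) (hq : q ∈ ps) (hpq : p ≠ q) :
    ∀ e ∈ p.walk.edges, e ∉ q.walk.edges :=
  have : Std.Symm fun p q : PathIn G => ∀ e ∈ p.walk.edges, e ∉ q.walk.edges :=
    ⟨fun _ _ h e hb ha => h e ha hb⟩
  h.1.forall hp hq hpq

theorem perm (h : IsPathCover G ps) (hperm : ps.Perm qs) : IsPathCover G qs :=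
  ⟨hperm.pairwise h.1 fun h e hb ha => h e ha hb,
    fun e => (h.2 e).trans (by simp only [hperm.mem_iff])⟩

theorem cons_of_cons_cons (h : IsPathCover G (p :: q :: ps))
    (hr : ∀ e, e ∈ r.walk.edges ↔ e ∈ p.walk.edges ∨ e ∈ q.walk.edges) :
    IsPathCover G (r :: ps) := by
  obtain ⟨hpw, hcov⟩ := h
  simp only [List.pairwise_cons, List.mem_cons, forall_eq_or_imp] at hpw
  refine ⟨List.pairwise_cons.mpr ⟨fun x hx e he => ?_, hpw.2.2⟩, fun e => ?_⟩
  · rcases (hr e).mp he with he | he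
    exacts [hpw.1.2 x hx e he, hpw.2.1 x hx e he]
  · simp [hcov e, hr, or_assoc]

theorem merge [DecidableEq (PathIn G)] (h : IsPathCover G ps) (hp : p ∈ ps) (hq : q ∈ ps)
    (hpq : p ≠ q) (hr : ∀ e, e ∈ r.walk.edges ↔ e ∈ p.walk.edges ∨ e ∈ q.walk.edges) :
    IsPathCover G (r :: (ps.erase p).erase q) :=
  have hq' : q ∈ ps.erase p := (List.mem_erase_of_ne hpq.symm).mpr hq
  (h.perm ((List.perm_cons_erase hp).trans
    (List.Perm.cons p (List.perm_cons_erase hq')))).cons_of_cons_cons hr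

theorem sup {ps₁ : List (PathIn G₁)} {ps₂ : List (PathIn G₂)} (h₁ : IsPathCover G₁ ps₁)
    (h₂ : IsPathCover G₂ ps₂) (hedge : ∀ e ∈ G₁.edgeSet, e ∉ G₂.edgeSet) :
    IsPathCover (G₁ ⊔ G₂)
      (ps₁.map (·.mapLe le_sup_left) ++ ps₂.map (·.mapLe le_sup_right)) := by
  refine ⟨List.pairwise_append.mpr ⟨?_, ?_, ?_⟩, fun e => ?_⟩
  · simpa [List.pairwise_map] using h₁.1
  · simpa [List.pairwise_map] using h₂.1
  · simp only [List.forall_mem_map, PathIn.edges_mapLe]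
    exact fun p _ q _ e hp hq =>
      hedge e (p.walk.edges_subset_edgeSet hp) (q.walk.edges_subset_edgeSet hq)
  · simp [h₁.2 e, h₂.2 e, or_and_right, exists_or]

end IsPathCover

theorem stmt_7_general {V : Type*} (G₁ G₂ : SimpleGraph V) (s t : V)
    (hshare : ∀ v ∈ G₁.support, v ∈ G₂.support → v = s ∨ v = t)
    (hedge : ∀ e ∈ G₁.edgeSet, e ∉ G₂.edgeSet)
    (ps₁ : List (PathIn G₁)) (h₁ : IsPathCover G₁ ps₁)
    (P Q : PathIn G₁) (hP : P ∈ ps₁) (hQ : Q ∈ ps₁) (hPQ : P ≠ Q)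
    (hPst : (P.a = s ∧ P.b = t) ∨ (P.a = t ∧ P.b = s))
    (hQa : Q.a = t) (hQs : s ∉ Q.walk.support)
    (ps₂ : List (PathIn G₂)) (h₂ : IsPathCover G₂ ps₂)
    (h₂st : ∃ p ∈ ps₂, (p.a = s ∧ p.b = t) ∨ (p.a = t ∧ p.b = s)) :
    ∃ qs : List (PathIn (G₁ ⊔ G₂)), IsPathCover (G₁ ⊔ G₂) qs ∧
      qs.length + 1 = ps₁.length + ps₂.length ∧
      ∃ q ∈ qs, (q.a = s ∧ q.b = t) ∨ (q.a = t ∧ q.b = s) := by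
  classical
  obtain ⟨R, hR, hRst⟩ := h₂st
  set ps := ps₁.map (·.mapLe le_sup_left) ++ ps₂.map (·.mapLe (le_sup_right : G₂ ≤ G₁ ⊔ G₂))
  have mem₁ {p : PathIn G₁} (hp : p ∈ ps₁) : p.mapLe le_sup_left ∈ ps :=
    List.mem_append_left _ (List.mem_map_of_mem hp)
  have mem₂ {p : PathIn G₂} (hp : p ∈ ps₂) : p.mapLe le_sup_right ∈ ps :=
    List.mem_append_right _ (List.mem_map_of_mem hp)
  have hne₁₂ (p : PathIn G₁) (q : PathIn G₂) :
      p.mapLe le_sup_left ≠ q.mapLe (le_sup_right : G₂ ≤ G₁ ⊔ G₂) :=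
    PathIn.ne_of_edges_disjoint fun e hp hq => hedge e
      (p.walk.edges_subset_edgeSet (by simpa using hp))
      (q.walk.edges_subset_edgeSet (by simpa using hq))
  have hPQ' : P.mapLe le_sup_left ≠ Q.mapLe (le_sup_left : G₁ ≤ G₁ ⊔ G₂) :=
    PathIn.ne_of_edges_disjoint (by simpa using h₁.edges_disjoint hP hQ hPQ)
  have hRQ : ∀ x ∈ R.walk.support, x ∈ Q.walk.support → x = t := fun x hxR hxQ =>
    (hshare x (mem_support_of_mem_walk_support _ Q.nonNil hxQ)
      (mem_support_of_mem_walk_support _ R.nonNil hxR)).resolve_left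
      fun hxs => hQs (hxs ▸ hxQ)
  obtain ⟨M, hM⟩ := PathIn.exists_merge (R.mapLe le_sup_right) (Q.mapLe le_sup_left)
    (v := t) (hRst.elim (.inr ·.2) (.inl ·.1)) (.inl hQa) (by simpa using hRQ)
  refine ⟨_, (h₁.sup h₂ hedge).merge (mem₂ hR) (mem₁ hQ) (hne₁₂ Q R).symm hM, ?_,
    P.mapLe le_sup_left, ?_, hPst⟩
  · have := List.length_erase_erase_add_two (mem₂ hR) (mem₁ hQ) (hne₁₂ Q R).symm
    simp only [ps, List.length_cons, List.length_append, List.length_map] at this ⊢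
    omega
  · exact List.mem_cons_of_mem _ ((List.mem_erase_of_ne hPQ').mpr
      ((List.mem_erase_of_ne (hne₁₂ P R)).mpr (mem₁ hP)))

/-- Parallel composition: let G₁ and G₂ be two-terminal graphs with common source s and
common sink t, sharing no other vertex and no edge. If G₁ has a path cover containing
an s–t path P together with a path Q that starts at t and does not contain s, and G₂
has a path cover containing an s–t path, then the parallel composition G₁ ⊔ G₂ has a
path cover of size p₁ + p₂ − 1 containing an s–t path, where p₁ and p₂ are the sizes
of the two given covers. -/
theorem stmt_7 {V : Type*} (G₁ G₂ : SimpleGraph V) (s t : V) (hst : s ≠ t)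
    (hshare : ∀ v ∈ G₁.support, v ∈ G₂.support → v = s ∨ v = t)
    (hedge : ∀ e ∈ G₁.edgeSet, e ∉ G₂.edgeSet)
    (ps₁ : List (PathIn G₁)) (h₁ : IsPathCover G₁ ps₁)
    (P Q : PathIn G₁) (hP : P ∈ ps₁) (hQ : Q ∈ ps₁) (hPQ : P ≠ Q)
    (hPst : (P.a = s ∧ P.b = t) ∨ (P.a = t ∧ P.b = s))
    (hQa : Q.a = t) (hQs : s ∉ Q.walk.support)
    (ps₂ : List (PathIn G₂)) (h₂ : IsPathCover G₂ ps₂)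
    (h₂st : ∃ p ∈ ps₂, (p.a = s ∧ p.b = t) ∨ (p.a = t ∧ p.b = s)) :
    ∃ qs : List (PathIn (G₁ ⊔ G₂)), IsPathCover (G₁ ⊔ G₂) qs ∧
      qs.length + 1 = ps₁.length + ps₂.length ∧
      ∃ q ∈ qs, (q.a = s ∧ q.b = t) ∨ (q.a = t ∧ q.b = s) :=
  stmt_7_general G₁ G₂ s t hshare hedge ps₁ h₁ P Q hP hQ hPQ hPst hQa hQs ps₂ h₂ h₂st
end

section
/- Every full planar 3-tree on n vertices admits a path cover of size at most ⌈n/3⌉. -/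
open SimpleGraph

/-- Vertices of a planar 3-tree: the three vertices of the initial triangle (`Sum.inl`)
together with the stacked vertices, identified with their addresses in the stacking
tree (`Sum.inr`). -/
abbrev Vtx : Type := Fin 3 ⊕ List (Fin 3)

/-- Given the current address prefix, the current triangular face, and the remaining
address, compute the triangular face at that address. Stacking the vertex with
address `pre` into the face (x, y, z) creates the three faces obtained by replacing
one of x, y, z by the new vertex. -/
def faceAux : List (Fin 3) → (Vtx × Vtx × Vtx) → List (Fin 3) → Vtx × Vtx × Vtx
  | _, f, [] => f
  | pre, (x, y, z), i :: rest =>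
      faceAux (pre ++ [i])
        (if i = 0 then (Sum.inr pre, y, z)
         else if i = 1 then (x, Sum.inr pre, z)
         else (x, y, Sum.inr pre)) rest

/-- The triangular face into which the vertex with address `p` is stacked. -/
def faceAt (p : List (Fin 3)) : Vtx × Vtx × Vtx :=
  faceAux [] (Sum.inl 0, Sum.inl 1, Sum.inl 2) p

/-- A stacking tree, encoded as a finite, prefix-closed set of addresses: each element
is a stacked vertex, and the (up to three) children of the vertex at address `p` are
the addresses `p ++ [i]`, corresponding to the three faces created by stacking it. -/
def IsStackTree (T : Finset (List (Fin 3))) : Prop :=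
  ∀ (p : List (Fin 3)) (i : Fin 3), p ++ [i] ∈ T → p ∈ T

/-- The planar 3-tree determined by a stacking tree `T`: start from the triangle on the
three `Sum.inl` vertices, and join each stacked vertex to the three vertices of the
face into which it is stacked. It has `T.card + 3` vertices. -/
def graphOf (T : Finset (List (Fin 3))) : SimpleGraph Vtx :=
  SimpleGraph.fromEdgeSet
    ({s(Sum.inl 0, Sum.inl 1), s(Sum.inl 0, Sum.inl 2), s(Sum.inl 1, Sum.inl 2)} ∪
      {e | ∃ p ∈ T, ∃ x : Vtx,
        (x = (faceAt p).1 ∨ x = (faceAt p).2.1 ∨ x = (faceAt p).2.2) ∧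
        e = s(Sum.inr p, x)})

/-- A planar 3-tree is full if its stacking tree is a proper ternary tree: it has a
root and every node has either exactly three children or none. -/
def IsFull (T : Finset (List (Fin 3))) : Prop :=
  ([] : List (Fin 3)) ∈ T ∧
  ∀ p ∈ T, (∀ i : Fin 3, p ++ [i] ∈ T) ∨ (∀ i : Fin 3, p ++ [i] ∉ T)

/-! Induct on the stacking tree from the leaves up. The edges created inside a face `xyz` whose
stacking subtree has `k` internal nodes split into a path from `x` to `y`, a path starting at
`z`, and `k` further paths. For the vertex `v` stacked into `xyz`, the sub-faces `vyz`, `zxv`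
and `xvy` are decomposed in this orientation; their open paths, glued through `v`, give the two
open paths of `xyz` and one new closed path. At the root the three edges of the outer triangle
extend the two open paths, giving `k + 2` paths in all; a full ternary tree with `k` internal
nodes has `3k + 1` nodes, so `n = 3k + 4` and `k + 2 = ⌈n/3⌉`. -/

def pathEdges {α : Type*} (l : List α) : List (Sym2 α) := l.zipWith (s(·, ·)) l.tail

section pathEdges

variable {α : Type*}

@[simp] lemma pathEdges_singleton (a : α) : pathEdges [a] = [] := rfl

@[simp] lemma pathEdges_cons_cons (a b : α) (l : List α) :
    pathEdges (a :: b :: l) = s(a, b) :: pathEdges (b :: l) := rfl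

lemma pathEdges_append_cons (l₁ l₂ : List α) (x : α) :
    pathEdges (l₁ ++ x :: l₂) = pathEdges (l₁ ++ [x]) ++ pathEdges (x :: l₂) := by
  induction l₁ with
  | nil => simp
  | cons a l₁ ih => cases l₁ with
    | nil => simp
    | cons b l₁ => simpa using ih

lemma pathEdges_reverse (l : List α) : pathEdges l.reverse = (pathEdges l).reverse := by
  induction l with
  | nil => rfl
  | cons a l ih => cases l with
    | nil => rfl
    | cons b l =>
      rw [List.reverse_cons, List.reverse_cons, List.append_assoc, List.singleton_append,
        pathEdges_append_cons, ← List.reverse_cons, ih]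
      simp [Sym2.eq_swap]

lemma isChain_adj_of_pathEdges_subset {G : SimpleGraph α} {l : List α}
    (h : ∀ e ∈ pathEdges l, e ∈ G.edgeSet) : l.IsChain G.Adj := by
  induction l with
  | nil => exact .nil
  | cons a l ih => cases l with
    | nil => exact .singleton a
    | cons b l =>
      simp only [pathEdges_cons_cons, List.mem_cons, forall_eq_or_imp] at h
      exact .cons_cons h.1 (ih h.2)

end pathEdges

def PathIn.ofList {V : Type*} {G : SimpleGraph V} (l : List V) (hlen : 2 ≤ l.length)
    (hnd : l.Nodup) (hG : ∀ e ∈ pathEdges l, e ∈ G.edgeSet) : PathIn G where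
  a := l.head (List.ne_nil_of_length_pos (by omega))
  b := l.getLast (List.ne_nil_of_length_pos (by omega))
  walk := .ofSupport l _ (isChain_adj_of_pathEdges_subset hG)
  isPath := by rw [Walk.isPath_def, Walk.support_ofSupport]; exact hnd
  nonNil := by rw [← Walk.length_eq_zero_iff, Walk.length_ofSupport]; omega

@[simp] lemma PathIn.ofList_edges {V : Type*} {G : SimpleGraph V} (l : List V)
    (hlen : 2 ≤ l.length) (hnd : l.Nodup) (hG : ∀ e ∈ pathEdges l, e ∈ G.edgeSet) :
    (PathIn.ofList l hlen hnd hG).walk.edges = pathEdges l := by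
  rw [PathIn.ofList, Walk.edges_eq_zipWith_support, Walk.support_ofSupport, pathEdges]

theorem exists_isPathCover_of_flatMap {V : Type*} (G : SimpleGraph V) (L : List (List V))
    (hL : ∀ l ∈ L, 2 ≤ l.length ∧ l.Nodup) (hnd : (L.flatMap pathEdges).Nodup)
    (hG : ∀ e, e ∈ G.edgeSet ↔ e ∈ L.flatMap pathEdges) :
    ∃ ps : List (PathIn G), IsPathCover G ps ∧ ps.length = L.length := by
  have hL' : ∀ l ∈ L, 2 ≤ l.length ∧ l.Nodup ∧ ∀ e ∈ pathEdges l, e ∈ G.edgeSet :=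
    fun l hl => ⟨(hL l hl).1, (hL l hl).2,
      fun e he => (hG e).2 (List.mem_flatMap.2 ⟨l, hl, he⟩)⟩
  refine ⟨L.pmap (fun l hl => PathIn.ofList l hl.1 hl.2.1 hl.2.2) hL', ⟨?_, fun e => ?_⟩,
    by simp⟩
  · rw [List.pairwise_pmap]
    exact (List.nodup_flatMap.1 hnd).2.imp fun hdisj _ _ e he he' =>
      hdisj (by simpa using he) (by simpa using he')
  · simp [hG, List.mem_pmap]

section PathDecomp

variable {α : Type*}

/-- The induction invariant for the multiset `E` of edges created inside a face `xyz` whose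
interior vertices form `S`. -/
structure IsPathDecomp (x y z : α) (S : Set α) (E : Multiset (Sym2 α))
    (mid tail : List α) (closed : List (List α)) : Prop where
  mid_subset : ∀ w ∈ mid, w ∈ S
  tail_subset : ∀ w ∈ tail, w ∈ S
  mid_nodup : mid.Nodup
  tail_nodup : tail.Nodup
  closed_paths : ∀ l ∈ closed, 2 ≤ l.length ∧ l.Nodup
  edges_eq : (↑(pathEdges (x :: mid ++ [y]) ++ pathEdges (z :: tail) ++
    closed.flatMap pathEdges) : Multiset (Sym2 α)) = E

lemma isPathDecomp_single (x y z : α) {S : Set α} {v : α} (hv : v ∈ S) :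
    IsPathDecomp x y z S ({s(v, x)} + {s(v, y)} + {s(v, z)}) [v] [v] [] where
  mid_subset := by simpa using hv
  tail_subset := by simpa using hv
  mid_nodup := List.nodup_singleton _
  tail_nodup := List.nodup_singleton _
  closed_paths := by simp
  edges_eq := by simp [Sym2.eq_swap]; rfl

lemma IsPathDecomp.join {x y z v : α} {S Si Sj Sk : Set α} {Ei Ej Ek : Multiset (Sym2 α)}
    {mi mj mk ti tj tk : List α} {ci cj ck : List (List α)}
    (hxy : x ≠ y) (hxz : x ≠ z) (hyz : y ≠ z) (hx : x ∉ S) (hy : y ∉ S) (hz : z ∉ S)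
    (hv : v ∈ S) (hvi : v ∉ Si) (hvj : v ∉ Sj) (hvk : v ∉ Sk)
    (hSi : Si ⊆ S) (hSj : Sj ⊆ S) (hSk : Sk ⊆ S)
    (hij : Disjoint Si Sj) (hik : Disjoint Si Sk) (hjk : Disjoint Sj Sk)
    (hi : IsPathDecomp v y z Si Ei mi ti ci) (hj : IsPathDecomp z x v Sj Ej mj tj cj)
    (hk : IsPathDecomp x v y Sk Ek mk tk ck) :
    IsPathDecomp x y z S ({s(v, x)} + {s(v, y)} + {s(v, z)} + (Ei + Ej + Ek))
      (mk ++ v :: mi) (v :: tj)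
      ((ti.reverse ++ z :: mj ++ x :: v :: y :: tk) :: (ci ++ cj ++ ck)) where
  mid_subset := by
    simp only [List.mem_append, List.mem_cons]
    rintro w (hw | rfl | hw)
    exacts [hSk (hk.mid_subset w hw), hv, hSi (hi.mid_subset w hw)]
  tail_subset := by
    simp only [List.mem_cons]
    rintro w (rfl | hw)
    exacts [hv, hSj (hj.tail_subset w hw)]
  mid_nodup := by
    have := hk.mid_subset; have := hi.mid_subset; have := hk.mid_nodup; have := hi.mid_nodup
    rw [Set.disjoint_left] at hik
    simp only [List.nodup_append, List.nodup_cons, List.mem_cons]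
    grind
  tail_nodup := List.nodup_cons.2 ⟨fun h => hvj (hj.tail_subset _ h), hj.tail_nodup⟩
  closed_paths := by
    simp only [List.mem_cons, List.mem_append]
    rintro l (rfl | (hl | hl) | hl)
    · refine ⟨by simp; omega, ?_⟩
      have := hi.tail_subset; have := hj.mid_subset; have := hk.tail_subset
      have := hi.tail_nodup; have := hj.mid_nodup; have := hk.tail_nodup
      rw [Set.disjoint_left] at hij hik hjk
      simp only [List.nodup_append, List.nodup_cons, List.nodup_reverse, List.mem_append,
        List.mem_cons, List.mem_reverse]
      grind
    exacts [hi.closed_paths l hl, hj.closed_paths l hl, hk.closed_paths l hl]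
  edges_eq := by
    rw [← hi.edges_eq, ← hj.edges_eq, ← hk.edges_eq]
    have hmid : pathEdges (x :: (mk ++ v :: mi) ++ [y]) =
        pathEdges (x :: mk ++ [v]) ++ pathEdges (v :: mi ++ [y]) := by
      simpa using pathEdges_append_cons (x :: mk) (mi ++ [y]) v
    have hclosed : pathEdges (ti.reverse ++ z :: mj ++ x :: v :: y :: tk) =
        (pathEdges (z :: ti)).reverse ++ pathEdges (z :: mj ++ [x]) ++
          s(x, v) :: s(v, y) :: pathEdges (y :: tk) := by
      rw [List.append_assoc, List.cons_append, pathEdges_append_cons ti.reverse,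
        ← List.reverse_cons, pathEdges_reverse, ← List.cons_append,
        pathEdges_append_cons (z :: mj)]
      simp
    simp only [hmid, hclosed, pathEdges_cons_cons, List.flatMap_cons, List.flatMap_append,
      ← Multiset.coe_add, Multiset.coe_reverse, ← Multiset.cons_coe, Sym2.eq_swap (a := x),
      Sym2.eq_swap (a := z)]
    simp only [← Multiset.singleton_add]
    abel

lemma IsPathDecomp.closeTriangle {x y z : α} {S : Set α} {E : Multiset (Sym2 α)}
    {mid tail : List α} {closed : List (List α)} (hd : IsPathDecomp x y z S E mid tail closed)
    (hxy : x ≠ y) (hxz : x ≠ z) (hyz : y ≠ z) (hx : x ∉ S) (hy : y ∉ S) (hz : z ∉ S) :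
    (∀ l ∈ (x :: mid ++ [y, z]) :: (y :: x :: z :: tail) :: closed,
      2 ≤ l.length ∧ l.Nodup) ∧
      (↑(((x :: mid ++ [y, z]) :: (y :: x :: z :: tail) :: closed).flatMap pathEdges) :
        Multiset (Sym2 α)) = {s(x, y), s(x, z), s(y, z)} + E := by
  refine ⟨?_, ?_⟩
  · have := hd.mid_subset; have := hd.tail_subset; have := hd.mid_nodup; have := hd.tail_nodup
    simp only [List.mem_cons]
    rintro l (rfl | rfl | hl)
    · refine ⟨by simp, ?_⟩
      simp only [List.cons_append, List.nodup_cons, List.nodup_append, List.mem_append,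
        List.mem_cons]
      grind
    · refine ⟨by simp, ?_⟩
      simp only [List.nodup_cons, List.mem_cons]
      grind
    · exact hd.closed_paths l hl
  · rw [← hd.edges_eq]
    have hstub : pathEdges (x :: mid ++ [y, z]) = pathEdges (x :: mid ++ [y]) ++ [s(y, z)] := by
      simpa using pathEdges_append_cons (x :: mid) [z] y
    simp only [List.flatMap_cons, hstub, pathEdges_cons_cons, ← Multiset.coe_add,
      ← Multiset.cons_coe, Sym2.eq_swap (a := y) (b := x)]
    simp only [Multiset.insert_eq_cons, ← Multiset.singleton_add]
    abel

end PathDecomp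

lemma Sym2.eq_of_mk_eq_of_lt_of_lt {α : Type*} (r : α → ℕ) {u x u' x' : α}
    (h : s(u, x) = s(u', x')) (hx : r x < r u) (hx' : r x' < r u') : u = u' := by
  rcases Sym2.eq_iff.1 h with ⟨rfl, -⟩ | ⟨rfl, rfl⟩
  · rfl
  · omega

lemma Fin.sum_univ_three_of_ne {M : Type*} [AddCommMonoid M] (g : Fin 3 → M)
    {i j k : Fin 3} (hij : i ≠ j) (hik : i ≠ k) (hjk : j ≠ k) :
    ∑ c, g c = g i + g j + g k := by
  rw [Fin.sum_univ_three]
  fin_cases i <;> fin_cases j <;> fin_cases k <;> simp_all <;> abel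

lemma Function.Injective.update_of_forall_ne {α β : Type*} [DecidableEq α] {f : α → β}
    (hf : Function.Injective f) {b : β} (hb : ∀ a, f a ≠ b) (a : α) :
    Function.Injective (Function.update f a b) := by
  intro a₁ a₂ h
  simp only [Function.update_apply] at h
  split_ifs at h with h₁ h₂ h₂
  exacts [h₁.trans h₂.symm, absurd h.symm (hb _), absurd h (hb _), hf h]

inductive FullTernaryTree
  | leaf
  | node (child : Fin 3 → FullTernaryTree)

namespace FullTernaryTree

def addrs : FullTernaryTree → Finset (List (Fin 3))
  | leaf => {[]}
  | node t => insert [] (Finset.univ.biUnion fun c =>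
      (t c).addrs.map ⟨List.cons c, List.cons_injective⟩)

def internalCount : FullTernaryTree → ℕ
  | leaf => 0
  | node t => 1 + ∑ c, (t c).internalCount

@[simp] lemma nil_mem_addrs (t : FullTernaryTree) : [] ∈ t.addrs := by
  cases t <;> simp [addrs]

@[simp] lemma mem_addrs_leaf {a : List (Fin 3)} : a ∈ leaf.addrs ↔ a = [] := by
  simp [addrs]

@[simp] lemma cons_mem_addrs_node {t : Fin 3 → FullTernaryTree} {c : Fin 3}
    {a : List (Fin 3)} : c :: a ∈ (node t).addrs ↔ a ∈ (t c).addrs := by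
  simp [addrs]

lemma card_addrs (t : FullTernaryTree) : t.addrs.card = 3 * t.internalCount + 1 := by
  induction t with
  | leaf => rfl
  | node t ih =>
    rw [addrs, Finset.card_insert_of_notMem (by simp), Finset.card_biUnion]
    · simp [ih, internalCount, Finset.sum_add_distrib, Finset.mul_sum, mul_add]
      ring
    · intro c _ c' _ hcc'
      simp [Finset.disjoint_left, Ne.symm hcc']

end FullTernaryTree

lemma IsStackTree.mem_of_prefix {T : Finset (List (Fin 3))} (hT : IsStackTree T)
    {p q : List (Fin 3)} (hqp : q <+: p) (hp : p ∈ T) : q ∈ T := by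
  induction p using List.reverseRecOn with
  | nil => rwa [List.prefix_nil.1 hqp]
  | append_singleton p i ih =>
    rcases List.prefix_concat_iff.1 hqp with rfl | hqp
    exacts [hp, ih hqp (hT p i hp)]

noncomputable def subtreeAt (T : Finset (List (Fin 3))) (c : Fin 3) : Finset (List (Fin 3)) :=
  T.preimage (List.cons c) List.cons_injective.injOn

@[simp] lemma mem_subtreeAt {T : Finset (List (Fin 3))} {c : Fin 3} {a : List (Fin 3)} :
    a ∈ subtreeAt T c ↔ c :: a ∈ T :=
  Finset.mem_preimage

lemma IsStackTree.subtreeAt {T : Finset (List (Fin 3))} (hT : IsStackTree T) (c : Fin 3) :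
    IsStackTree (subtreeAt T c) := fun p i hp => by
  simpa using hT (c :: p) i (by simpa using hp)

lemma IsFull.subtreeAt {T : Finset (List (Fin 3))} (hfull : IsFull T) {c : Fin 3}
    (hc : [c] ∈ T) : IsFull (subtreeAt T c) :=
  ⟨by simpa using hc, fun p hp => by simpa using hfull.2 (c :: p) (by simpa using hp)⟩

lemma IsStackTree.eq_singleton_nil {T : Finset (List (Fin 3))} (hT : IsStackTree T)
    (hroot : [] ∈ T) (hleaf : ∀ c : Fin 3, [c] ∉ T) : T = {[]} := by
  refine Finset.eq_singleton_iff_unique_mem.2 ⟨hroot, fun p hp => ?_⟩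
  cases p with
  | nil => rfl
  | cons c a => exact (hleaf c (hT.mem_of_prefix ⟨a, rfl⟩ hp)).elim

lemma eq_addrs_node {T : Finset (List (Fin 3))} (hroot : [] ∈ T)
    {t : Fin 3 → FullTernaryTree} (ht : ∀ c, subtreeAt T c = (t c).addrs) :
    T = (FullTernaryTree.node t).addrs := by
  ext p
  cases p with
  | nil => simpa using hroot
  | cons c a => rw [FullTernaryTree.cons_mem_addrs_node, ← ht, mem_subtreeAt]

theorem IsFull.exists_eq_addrs {T : Finset (List (Fin 3))} (hfull : IsFull T)
    (hT : IsStackTree T) : ∃ t : FullTernaryTree, T = t.addrs := by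
  obtain ⟨n, hn⟩ : ∃ n, ∀ p ∈ T, p.length < n := ⟨T.sup List.length + 1, fun p hp =>
    Nat.lt_succ_of_le (Finset.le_sup (f := List.length) hp)⟩
  induction n generalizing T with
  | zero => exact absurd (hn [] hfull.1) (by simp)
  | succ n ih =>
    rcases hfull.2 [] hfull.1 with hnode | hleaf
    · have hc : ∀ c : Fin 3, [c] ∈ T := by simpa using hnode
      choose t ht using fun c => ih (hfull.subtreeAt (hc c)) (hT.subtreeAt c)
        fun a ha => by simpa using hn _ (mem_subtreeAt.1 ha)
      exact ⟨.node t, eq_addrs_node hfull.1 ht⟩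
    · exact ⟨.leaf, hT.eq_singleton_nil hfull.1 (by simpa using hleaf)⟩

namespace Planar3Tree

open FullTernaryTree

/-- The corners of the face into which a vertex is stacked have smaller rank than the vertex. -/
def rank : Vtx → ℕ
  | .inl _ => 0
  | .inr q => q.length + 1

def descendants (pre : List (Fin 3)) : Set Vtx := Set.range fun a => Sum.inr (pre ++ a)

lemma lt_rank_of_mem_descendants {pre : List (Fin 3)} {w : Vtx} (hw : w ∈ descendants pre) :
    pre.length < rank w := by
  obtain ⟨a, rfl⟩ := hw
  simp [rank]

lemma inr_mem_descendants (pre : List (Fin 3)) : Sum.inr pre ∈ descendants pre :=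
  ⟨[], by simp⟩

lemma descendants_append_subset (pre a : List (Fin 3)) :
    descendants (pre ++ a) ⊆ descendants pre := by
  rintro _ ⟨b, rfl⟩
  exact ⟨a ++ b, by simp⟩

lemma inr_notMem_descendants_append_singleton (pre : List (Fin 3)) (c : Fin 3) :
    Sum.inr pre ∉ descendants (pre ++ [c]) := fun h => by
  simpa [rank] using lt_rank_of_mem_descendants h

lemma disjoint_descendants {pre : List (Fin 3)} {c c' : Fin 3} (h : c ≠ c') :
    Disjoint (descendants (pre ++ [c])) (descendants (pre ++ [c'])) := by
  rw [Set.disjoint_left]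
  rintro _ ⟨a, rfl⟩ ⟨a', ha'⟩
  simp only [Sum.inr.injEq, List.append_assoc, List.append_right_inj, List.singleton_append,
    List.cons.injEq] at ha'
  exact h ha'.1.symm

def IsFaceBelow (pre : List (Fin 3)) (f : Fin 3 → Vtx) : Prop :=
  Function.Injective f ∧ ∀ c, rank (f c) ≤ pre.length

lemma isFaceBelow_inl : IsFaceBelow [] Sum.inl :=
  ⟨Sum.inl_injective, fun _ => le_rfl⟩

section IsFaceBelow

variable {pre : List (Fin 3)} {f : Fin 3 → Vtx}

lemma IsFaceBelow.notMem_descendants (hf : IsFaceBelow pre f) (c : Fin 3) :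
    f c ∉ descendants pre := fun h =>
  (hf.2 c).not_gt (lt_rank_of_mem_descendants h)

lemma IsFaceBelow.ne_inr (hf : IsFaceBelow pre f) (c : Fin 3) : f c ≠ Sum.inr pre := fun h =>
  hf.notMem_descendants c (h ▸ inr_mem_descendants pre)

lemma IsFaceBelow.update (hf : IsFaceBelow pre f) (c : Fin 3) :
    IsFaceBelow (pre ++ [c]) (Function.update f c (Sum.inr pre)) := by
  refine ⟨hf.1.update_of_forall_ne hf.ne_inr c, fun c' => ?_⟩
  rcases eq_or_ne c' c with rfl | h
  · simp [rank]
  · simpa [h] using (hf.2 c').trans (Nat.le_succ _)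

end IsFaceBelow

/-- The face into which the vertex with address `pre ++ a` is stacked, given that the vertex with
address `pre` is stacked into `f`. -/
def faceFrom (f : Fin 3 → Vtx) (pre : List (Fin 3)) : List (Fin 3) → Fin 3 → Vtx
  | [] => f
  | c :: a => faceFrom (Function.update f c (Sum.inr pre)) (pre ++ [c]) a

lemma IsFaceBelow.faceFrom {pre : List (Fin 3)} {f : Fin 3 → Vtx} (hf : IsFaceBelow pre f)
    (a : List (Fin 3)) : IsFaceBelow (pre ++ a) (faceFrom f pre a) := by
  induction a generalizing f pre with
  | nil => simpa [Planar3Tree.faceFrom] using hf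
  | cons c a ih => simpa [Planar3Tree.faceFrom] using ih (hf.update c)

lemma faceAux_eq_faceFrom (f : Fin 3 → Vtx) (pre a : List (Fin 3)) :
    faceAux pre (f 0, f 1, f 2) a =
      (faceFrom f pre a 0, faceFrom f pre a 1, faceFrom f pre a 2) := by
  induction a generalizing f pre with
  | nil => rfl
  | cons c a ih =>
    rw [faceAux, faceFrom, ← ih]
    congr 2
    fin_cases c <;> simp

lemma faceAt_eq_faceFrom (p : List (Fin 3)) :
    faceAt p = (faceFrom Sum.inl [] p 0, faceFrom Sum.inl [] p 1, faceFrom Sum.inl [] p 2) :=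
  faceAux_eq_faceFrom Sum.inl [] p

def spokes (f : Fin 3 → Vtx) (pre : List (Fin 3)) : Multiset (Sym2 Vtx) :=
  ∑ c, {s(Sum.inr pre, f c)}

def stackEdges (f : Fin 3 → Vtx) (pre : List (Fin 3)) : FullTernaryTree → Multiset (Sym2 Vtx)
  | leaf => spokes f pre
  | node t => spokes f pre +
      ∑ c, stackEdges (Function.update f c (Sum.inr pre)) (pre ++ [c]) (t c)

lemma mem_stackEdges {t : FullTernaryTree} {f : Fin 3 → Vtx} {pre : List (Fin 3)}
    {e : Sym2 Vtx} : e ∈ stackEdges f pre t ↔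
      ∃ a ∈ t.addrs, ∃ m, e = s(Sum.inr (pre ++ a), faceFrom f pre a m) := by
  induction t generalizing f pre with
  | leaf => simp [stackEdges, spokes, Multiset.mem_sum, faceFrom]
  | node t ih =>
    simp only [stackEdges, spokes, Multiset.mem_add, Multiset.mem_sum, Finset.mem_univ,
      true_and, Multiset.mem_singleton, ih]
    constructor
    · rintro (⟨m, rfl⟩ | ⟨c, a, ha, m, rfl⟩)
      exacts [⟨[], by simp, m, by simp [faceFrom]⟩,
        ⟨c :: a, by simpa using ha, m, by simp [faceFrom]⟩]
    · rintro ⟨_ | ⟨c, a⟩, ha, m, rfl⟩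
      exacts [Or.inl ⟨m, by simp [faceFrom]⟩,
        Or.inr ⟨c, a, by simpa using ha, m, by simp [faceFrom]⟩]

lemma exists_of_mem_stackEdges {t : FullTernaryTree} {f : Fin 3 → Vtx} {pre : List (Fin 3)}
    (hf : IsFaceBelow pre f) {e : Sym2 Vtx} (he : e ∈ stackEdges f pre t) :
    ∃ a x, e = s(Sum.inr (pre ++ a), x) ∧ rank x < rank (Sum.inr (pre ++ a)) := by
  obtain ⟨a, -, m, rfl⟩ := mem_stackEdges.1 he
  exact ⟨a, _, rfl, Nat.lt_succ_of_le ((hf.faceFrom a).2 m)⟩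

lemma spokes_nodup {f : Fin 3 → Vtx} {pre : List (Fin 3)} (hf : IsFaceBelow pre f) :
    (spokes f pre).Nodup := by
  have := hf.ne_inr
  simp_all [spokes, Fin.sum_univ_three, hf.1.ne_iff, eq_comm]

lemma stackEdges_nodup (t : FullTernaryTree) {f : Fin 3 → Vtx} {pre : List (Fin 3)}
    (hf : IsFaceBelow pre f) : (stackEdges f pre t).Nodup := by
  induction t generalizing f pre with
  | leaf => exact spokes_nodup hf
  | node t ih =>
    have child : ∀ c, ∀ e ∈ stackEdges (Function.update f c (Sum.inr pre)) (pre ++ [c]) (t c),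
        ∃ a x, e = s(Sum.inr (pre ++ c :: a), x) ∧ rank x < rank (Sum.inr (pre ++ c :: a)) :=
      fun c e he => by simpa using exists_of_mem_stackEdges (hf.update c) he
    have hchildren : ∀ c c', c ≠ c' → Disjoint
        (stackEdges (Function.update f c (Sum.inr pre)) (pre ++ [c]) (t c))
        (stackEdges (Function.update f c' (Sum.inr pre)) (pre ++ [c']) (t c')) := by
      refine fun c c' hcc' => Multiset.disjoint_left.2 fun he he' => ?_
      obtain ⟨a, x, rfl, hx⟩ := child c _ he
      obtain ⟨a', x', h, hx'⟩ := child c' _ he'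
      simpa [hcc'] using Sym2.eq_of_mk_eq_of_lt_of_lt rank h hx hx'
    have hspokes : Disjoint (spokes f pre)
        (∑ c, stackEdges (Function.update f c (Sum.inr pre)) (pre ++ [c]) (t c)) := by
      refine Multiset.disjoint_left.2 fun he he' => ?_
      obtain ⟨m, -, hm⟩ := Multiset.mem_sum.1 he
      obtain ⟨c, -, hc⟩ := Multiset.mem_sum.1 he'
      obtain ⟨a, x, h, hx⟩ := child c _ hc
      have := Sym2.eq_of_mk_eq_of_lt_of_lt rank ((Multiset.mem_singleton.1 hm).symm.trans h)
        (Nat.lt_succ_of_le (hf.2 m)) hx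
      simp at this
    rw [Fin.sum_univ_three] at hspokes
    rw [stackEdges, Fin.sum_univ_three, Multiset.nodup_add, Multiset.nodup_add,
      Multiset.nodup_add]
    exact ⟨spokes_nodup hf, ⟨⟨ih 0 (hf.update 0), ih 1 (hf.update 1),
      hchildren 0 1 (by decide)⟩, ih 2 (hf.update 2),
      Multiset.disjoint_add_left.2 ⟨hchildren 0 2 (by decide), hchildren 1 2 (by decide)⟩⟩,
      hspokes⟩

lemma stackEdges_node_eq {t : Fin 3 → FullTernaryTree} {f : Fin 3 → Vtx} {pre : List (Fin 3)}
    {i j k : Fin 3} (hij : i ≠ j) (hik : i ≠ k) (hjk : j ≠ k) :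
    stackEdges f pre (.node t) =
      {s(Sum.inr pre, f i)} + {s(Sum.inr pre, f j)} + {s(Sum.inr pre, f k)} +
        (stackEdges (Function.update f i (Sum.inr pre)) (pre ++ [i]) (t i) +
          stackEdges (Function.update f j (Sum.inr pre)) (pre ++ [j]) (t j) +
          stackEdges (Function.update f k (Sum.inr pre)) (pre ++ [k]) (t k)) := by
  rw [stackEdges, spokes, Fin.sum_univ_three_of_ne _ hij hik hjk,
    Fin.sum_univ_three_of_ne _ hij hik hjk]

theorem exists_isPathDecomp (t : FullTernaryTree) {f : Fin 3 → Vtx} {pre : List (Fin 3)}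
    (hf : IsFaceBelow pre f) {i j k : Fin 3} (hij : i ≠ j) (hik : i ≠ k) (hjk : j ≠ k) :
    ∃ mid tail closed, IsPathDecomp (f i) (f j) (f k) (descendants pre) (stackEdges f pre t)
      mid tail closed ∧ closed.length = t.internalCount := by
  induction t generalizing f pre i j k with
  | leaf =>
    refine ⟨[Sum.inr pre], [Sum.inr pre], [], ?_, rfl⟩
    rw [stackEdges, spokes, Fin.sum_univ_three_of_ne _ hij hik hjk]
    exact isPathDecomp_single _ _ _ (inr_mem_descendants pre)
  | node t ih =>
    -- orient the children as `IsPathDecomp.join` requires: `v y z`, `z x v` and `x v y`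
    obtain ⟨mi, ti, ci, hi, hci⟩ := ih i (hf.update i) hij hik hjk
    obtain ⟨mj, tj, cj, hj, hcj⟩ := ih j (hf.update j) hik.symm hjk.symm hij
    obtain ⟨mk, tk, ck, hk, hck⟩ := ih k (hf.update k) hik hij hjk.symm
    simp only [Function.update_self, Function.update_of_ne, hij, hik, hjk, hij.symm, hik.symm,
      hjk.symm, ne_eq, not_false_eq_true] at hi hj hk
    refine ⟨mk ++ Sum.inr pre :: mi, Sum.inr pre :: tj,
      (ti.reverse ++ f k :: mj ++ f i :: Sum.inr pre :: f j :: tk) :: (ci ++ cj ++ ck), ?_, ?_⟩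
    · have hout := inr_notMem_descendants_append_singleton pre
      have hsub := descendants_append_subset pre
      rw [stackEdges_node_eq hij hik hjk]
      exact hi.join (hf.1.ne hij) (hf.1.ne hik) (hf.1.ne hjk) (hf.notMem_descendants i)
        (hf.notMem_descendants j) (hf.notMem_descendants k) (inr_mem_descendants pre)
        (hout i) (hout j) (hout k) (hsub _) (hsub _) (hsub _)
        (disjoint_descendants hij) (disjoint_descendants hik) (disjoint_descendants hjk) hj hk
    · simp [internalCount, Fin.sum_univ_three_of_ne _ hij hik hjk, hci, hcj, hck]
      omega

def triangle : Multiset (Sym2 Vtx) :=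
  {s(Sum.inl 0, Sum.inl 1), s(Sum.inl 0, Sum.inl 2), s(Sum.inl 1, Sum.inl 2)}

lemma exists_eq_mk_inr_of_mem_stackEdges {t : FullTernaryTree} {e : Sym2 Vtx}
    (he : e ∈ stackEdges Sum.inl [] t) : ∃ a x, e = s(Sum.inr a, x) ∧ x ≠ Sum.inr a := by
  obtain ⟨a, x, rfl, hx⟩ := exists_of_mem_stackEdges isFaceBelow_inl he
  exact ⟨a, x, by simp, fun h => by simp [h] at hx⟩

lemma mem_edgeSet_graphOf (t : FullTernaryTree) (e : Sym2 Vtx) :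
    e ∈ (graphOf t.addrs).edgeSet ↔ e ∈ triangle + stackEdges Sum.inl [] t := by
  have htriangle : e ∈ ({s(Sum.inl 0, Sum.inl 1), s(Sum.inl 0, Sum.inl 2),
      s(Sum.inl 1, Sum.inl 2)} : Set (Sym2 Vtx)) ↔ e ∈ triangle := by
    simp [triangle]
  have hstack : (∃ p ∈ t.addrs, ∃ x : Vtx,
      (x = (faceAt p).1 ∨ x = (faceAt p).2.1 ∨ x = (faceAt p).2.2) ∧ e = s(Sum.inr p, x)) ↔
      e ∈ stackEdges Sum.inl [] t := by
    simp [mem_stackEdges, faceAt_eq_faceFrom, Fin.exists_fin_succ]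
  have hdiag : e ∈ triangle + stackEdges Sum.inl [] t → ¬ e.IsDiag := by
    intro he
    rcases Multiset.mem_add.1 he with he | he
    · simp only [triangle, Multiset.insert_eq_cons, Multiset.mem_cons,
        Multiset.mem_singleton] at he
      rcases he with rfl | rfl | rfl <;> simp
    · obtain ⟨a, x, rfl, hx⟩ := exists_eq_mk_inr_of_mem_stackEdges he
      simpa using hx.symm
  rw [graphOf, edgeSet_fromEdgeSet, Set.mem_sdiff, Set.mem_union, Set.mem_ofPred_eq, hstack,
    htriangle, ← Multiset.mem_add]
  exact ⟨And.left, fun h => ⟨h, hdiag h⟩⟩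

lemma triangle_add_stackEdges_nodup (t : FullTernaryTree) :
    (triangle + stackEdges Sum.inl [] t).Nodup := by
  refine Multiset.nodup_add.2 ⟨by simp [triangle], stackEdges_nodup t isFaceBelow_inl,
    Multiset.disjoint_left.2 fun he he' => ?_⟩
  obtain ⟨a, x, rfl, -⟩ := exists_eq_mk_inr_of_mem_stackEdges he'
  simp [triangle] at he

end Planar3Tree

open Planar3Tree

/-- Every full planar 3-tree on n vertices admits a path cover of size at most ⌈n/3⌉
(which is (n+2)/3 in natural-number arithmetic; here n = T.card + 3). -/
theorem stmt_11 (T : Finset (List (Fin 3))) (hT : IsStackTree T) (hfull : IsFull T) :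
    ∃ ps : List (PathIn (graphOf T)), IsPathCover (graphOf T) ps ∧
      ps.length ≤ (T.card + 3 + 2) / 3 := by
  obtain ⟨t, rfl⟩ := hfull.exists_eq_addrs hT
  obtain ⟨mid, tail, closed, hd, hclosed⟩ :=
    exists_isPathDecomp t isFaceBelow_inl (i := 0) (j := 1) (k := 2) (by decide) (by decide)
      (by decide)
  have hcorner := isFaceBelow_inl.notMem_descendants
  obtain ⟨hpaths, hedges⟩ :=
    hd.closeTriangle (by simp) (by simp) (by simp) (hcorner 0) (hcorner 1) (hcorner 2)
  obtain ⟨ps, hps, hlen⟩ := exists_isPathCover_of_flatMap (graphOf t.addrs) _ hpaths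
    (by rw [← Multiset.coe_nodup, hedges]; exact triangle_add_stackEdges_nodup t)
    (fun e => by rw [mem_edgeSet_graphOf, ← Multiset.mem_coe, hedges]; rfl)
  refine ⟨ps, hps, ?_⟩
  rw [hlen, FullTernaryTree.card_addrs]
  simp [hclosed]
  omega
end

section
/- Every simple graph in which every vertex has odd degree and which is connected admits a path cover of size exactly n/2, where n is the (necessarily even) number of vertices, assuming Lovász's theorem that every connected simple graph decomposes into at most ⌊n/2⌋ edge-disjoint paths and cycles. -/
open SimpleGraph

/-- A simple cycle in a graph `G`, given by a closed walk which is a cycle. -/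
structure CycleIn {V : Type*} (G : SimpleGraph V) where
  a : V
  walk : G.Walk a a
  isCycle : walk.IsCycle

/-- A decomposition of the edges of `G` into pairwise edge-disjoint simple paths and
simple cycles. -/
def IsPathCycleDecomp {V : Type*} (G : SimpleGraph V)
    (ps : List (PathIn G)) (cs : List (CycleIn G)) : Prop :=
  ((ps.map fun p => p.walk.edges) ++ (cs.map fun c => c.walk.edges)).Pairwise
    (fun l₁ l₂ => ∀ e ∈ l₁, e ∉ l₂) ∧
  ∀ e : Sym2 V, e ∈ G.edgeSet ↔
    ∃ l ∈ (ps.map fun p => p.walk.edges) ++ (cs.map fun c => c.walk.edges), e ∈ l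

lemma even_list_sum {l : List ℕ} (h : ∀ x ∈ l, Even x) : Even l.sum := by
  induction l with
  | nil => simp
  | cons a t ih =>
    simp only [List.sum_cons]
    exact (h a (by simp)).add (ih fun x hx => h x (by simp [hx]))

/-- Assuming Lovász's theorem (every connected simple graph on n vertices decomposes
into at most ⌊n/2⌋ edge-disjoint simple paths and cycles), every connected simple graph
in which every vertex has odd degree admits a path cover of size exactly n/2. -/
theorem stmt_19 {V : Type} [Fintype V] [DecidableEq V] (G : SimpleGraph V)
    [DecidableRel G.Adj]
    (lovasz : ∀ (W : Type) [Fintype W] (H : SimpleGraph W), H.Connected →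
      ∃ (ps : List (PathIn H)) (cs : List (CycleIn H)),
        IsPathCycleDecomp H ps cs ∧ ps.length + cs.length ≤ Fintype.card W / 2)
    (hconn : G.Connected) (hodd : ∀ v : V, Odd (G.degree v)) :
    ∃ ps : List (PathIn G), IsPathCover G ps ∧ 2 * ps.length = Fintype.card V := by
  obtain ⟨ps, cs, ⟨hpw, hcov⟩, hlen⟩ := lovasz V G hconn
  set L : List (List (Sym2 V)) :=
    (ps.map fun p => p.walk.edges) ++ (cs.map fun c => c.walk.edges) with hL
  have hnodupL : L.flatten.Nodup := by
    rw [List.nodup_flatten]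
    refine ⟨fun l hl => ?_, hpw.imp fun h => h⟩
    rcases List.mem_append.1 hl with h | h
    · obtain ⟨p, _, rfl⟩ := List.mem_map.1 h
      exact p.isPath.isTrail.edges_nodup
    · obtain ⟨c, _, rfl⟩ := List.mem_map.1 h
      exact c.isCycle.isTrail.edges_nodup
  have h1 : L.flatten.toFinset = G.edgeFinset := by
    ext e
    simp only [List.mem_toFinset, List.mem_flatten, SimpleGraph.mem_edgeFinset]
    exact ((hcov e).symm.trans (by tauto))
  have hdeg : ∀ v, G.degree v = L.flatten.countP (fun e => v ∈ e) := by
    intro v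
    rw [← SimpleGraph.card_incidenceFinset_eq_degree,
      SimpleGraph.incidenceFinset_eq_filter, ← h1,
      List.countP_eq_length_filter,
      ← List.toFinset_card_of_nodup (hnodupL.filter _), List.toFinset_filter]
    congr 1
    simp
  have hend : ∀ v : V, ∃ p ∈ ps, v = p.a ∨ v = p.b := by
    intro v
    have hodd' : Odd (L.flatten.countP fun e => v ∈ e) := hdeg v ▸ hodd v
    rw [List.countP_flatten, hL, List.map_append, List.sum_append] at hodd'
    by_contra hno
    push_neg at hno
    have hA : Even ((ps.map fun p => p.walk.edges).map
        (List.countP fun e => decide (v ∈ e))).sum := by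
      refine even_list_sum fun x hx => ?_
      obtain ⟨l, hl, rfl⟩ := List.mem_map.1 hx
      obtain ⟨p, hp, rfl⟩ := List.mem_map.1 hl
      exact p.isPath.isTrail.even_countP_edges_iff v |>.2
        fun _ => ⟨(hno p hp).1, (hno p hp).2⟩
    have hB : Even ((cs.map fun c => c.walk.edges).map
        (List.countP fun e => decide (v ∈ e))).sum := by
      refine even_list_sum fun x hx => ?_
      obtain ⟨l, hl, rfl⟩ := List.mem_map.1 hx
      obtain ⟨c, hc, rfl⟩ := List.mem_map.1 hl
      exact c.isCycle.isTrail.even_countP_edges_iff v |>.2 fun h => absurd rfl h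
    rw [Nat.even_iff] at hA hB
    rw [Nat.odd_iff] at hodd'
    omega
  have hcard : Fintype.card V ≤ 2 * ps.length := by
    have hsub : (Finset.univ : Finset V) ⊆
        (ps.map PathIn.a).toFinset ∪ (ps.map PathIn.b).toFinset := by
      intro v _
      obtain ⟨p, hp, h⟩ := hend v
      rw [Finset.mem_union, List.mem_toFinset, List.mem_toFinset,
        List.mem_map, List.mem_map]
      rcases h with rfl | rfl
      · exact Or.inl ⟨p, hp, rfl⟩
      · exact Or.inr ⟨p, hp, rfl⟩
    calc Fintype.card V = (Finset.univ : Finset V).card := rfl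
      _ ≤ ((ps.map PathIn.a).toFinset ∪ (ps.map PathIn.b).toFinset).card :=
        Finset.card_le_card hsub
      _ ≤ (ps.map PathIn.a).toFinset.card + (ps.map PathIn.b).toFinset.card :=
        Finset.card_union_le _ _
      _ ≤ (ps.map PathIn.a).length + (ps.map PathIn.b).length :=
        Nat.add_le_add (ps.map PathIn.a).toFinset_card_le
          (ps.map PathIn.b).toFinset_card_le
      _ = 2 * ps.length := by simp [Nat.two_mul]
  have hcs : cs.length = 0 := by omega
  have h2 : 2 * ps.length = Fintype.card V := by omega
  have hcsnil : cs = [] := List.length_eq_zero_iff.1 hcs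
  subst hcsnil
  rw [hL] at hpw hcov
  simp only [List.map_nil, List.append_nil] at hpw hcov
  refine ⟨ps, ⟨?_, fun e => (hcov e).trans ?_⟩, h2⟩
  · exact (List.pairwise_map.1 hpw)
  · simp only [List.mem_map]
    constructor
    · rintro ⟨l, ⟨p, hp, rfl⟩, he⟩
      exact ⟨p, hp, he⟩
    · rintro ⟨p, hp, he⟩
      exact ⟨_, ⟨p, hp, rfl⟩, he⟩
end
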